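/- Let H be a positive semidefinite Hermitian d×d matrix and let ψ be a random unit vector distributed according to the rotation-invariant probability measure μ on the unit sphere of ℂ^d ⊗ ℂ^d. Then the ensemble-average ergotropy of the reduced state satisfies 0 ≤ 𝔼_μ[E(T(ψ),H)] ≤ tr(H)/d. -/

import Mathlib

open scoped BigOperators ComplexOrder
open Matrix

/-- The eigenvalues of a Hermitian matrix, listed in increasing order
(junk value `0` for non-Hermitian matrices). -/
noncomputable def eigsInc {d : ℕ} (A : Matrix (Fin d) (Fin d) ℂ) : Fin d → ℝ :=
  @dite _ A.IsHermitian (Classical.propDecidable _)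
    (fun h => h.eigenvalues ∘ Tuple.sort h.eigenvalues) (fun _ => 0)

/-- The eigenvalues of a Hermitian matrix, listed in decreasing order. -/
noncomputable def eigsDec {d : ℕ} (A : Matrix (Fin d) (Fin d) ℂ) : Fin d → ℝ :=
  fun k => eigsInc A k.rev

/-- Ergotropy `E(ρ,H) = tr(ρH) - ∑ₖ λₖ Eₖ` with `λ` decreasing, `E` increasing. -/
noncomputable def ergotropy {d : ℕ} (ρ H : Matrix (Fin d) (Fin d) ℂ) : ℝ :=
  ((ρ * H).trace).re - ∑ k : Fin d, eigsDec ρ k * eigsInc H k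

/-- Operator norm (ℓ² → ℓ²) of a matrix. -/
noncomputable def opNorm {d : ℕ} (A : Matrix (Fin d) (Fin d) ℂ) : ℝ :=
  ‖Matrix.toEuclideanCLM (𝕜 := ℂ) A‖

/-- Trace norm `‖A‖₁ = tr √(AᴴA)`. -/
noncomputable def traceNorm {d : ℕ} (A : Matrix (Fin d) (Fin d) ℂ) : ℝ :=
  ((((Matrix.posSemidef_conjTranspose_mul_self A).1.eigenvectorUnitary : Matrix (Fin d) (Fin d) ℂ) *
    diagonal (((↑) : ℝ → ℂ) ∘ (√·) ∘ (Matrix.posSemidef_conjTranspose_mul_self A).1.eigenvalues) *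
    (star (Matrix.posSemidef_conjTranspose_mul_self A).1.eigenvectorUnitary :
      Matrix (Fin d) (Fin d) ℂ)).trace).re

/-- Trace distance. -/
noncomputable def traceDist {d : ℕ} (ρ σ : Matrix (Fin d) (Fin d) ℂ) : ℝ :=
  traceNorm (ρ - σ) / 2

/-- Positive semidefinite square root (junk value `0` on non-PSD matrices). -/
noncomputable def psdSqrt {d : ℕ} (A : Matrix (Fin d) (Fin d) ℂ) : Matrix (Fin d) (Fin d) ℂ :=
  @dite _ A.PosSemidef (Classical.propDecidable _) (fun h => (h.1.eigenvectorUnitary : Matrix (Fin d) (Fin d) ℂ) *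
    diagonal (((↑) : ℝ → ℂ) ∘ (√·) ∘ h.1.eigenvalues) * (star h.1.eigenvectorUnitary : Matrix (Fin d) (Fin d) ℂ)) (fun _ => 0)

/-- Uhlmann fidelity `F(ρ,σ) = (tr √(√ρ σ √ρ))²`. -/
noncomputable def fidelity {d : ℕ} (ρ σ : Matrix (Fin d) (Fin d) ℂ) : ℝ :=
  ((psdSqrt (psdSqrt ρ * σ * psdSqrt ρ)).trace).re ^ 2

/-- Bures distance. -/
noncomputable def buresDist {d : ℕ} (ρ σ : Matrix (Fin d) (Fin d) ℂ) : ℝ :=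
  Real.sqrt (2 - 2 * Real.sqrt (fidelity ρ σ))

/-- Hilbert–Schmidt distance. -/
noncomputable def hsDist {d : ℕ} (ρ σ : Matrix (Fin d) (Fin d) ℂ) : ℝ :=
  Real.sqrt ((((ρ - σ)ᴴ * (ρ - σ)).trace).re)

/-- von Neumann entropy `S(ρ) = -tr(ρ ln ρ) = -∑ᵢ λᵢ ln λᵢ`. -/
noncomputable def vnEntropy {d : ℕ} (ρ : Matrix (Fin d) (Fin d) ℂ) : ℝ :=
  -∑ i : Fin d, eigsInc ρ i * Real.log (eigsInc ρ i)

/-- `ψ ∈ ℂᵈ ⊗ ℂᵈ` is a purification of `ρ`. -/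
def IsPurification {d : ℕ} (ρ : Matrix (Fin d) (Fin d) ℂ)
    (ψ : EuclideanSpace ℂ (Fin d × Fin d)) : Prop :=
  ‖ψ‖ = 1 ∧ ∀ i j, ρ i j = ∑ k : Fin d, ψ (i, k) * (starRingEnd ℂ) (ψ (j, k))

/-- Partial trace over the second tensor factor of `|ψ⟩⟨ψ|`. -/
noncomputable def partialTrace {d : ℕ} (ψ : EuclideanSpace ℂ (Fin d × Fin d)) :
    Matrix (Fin d) (Fin d) ℂ :=
  Matrix.of fun i j => ∑ k : Fin d, ψ (i, k) * (starRingEnd ℂ) (ψ (j, k))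


/-- Borel measurable structure on . -/
noncomputable instance {ι : Type*} [Fintype ι] : MeasurableSpace (EuclideanSpace ℂ ι) := borel _

instance {ι : Type*} [Fintype ι] : BorelSpace (EuclideanSpace ℂ ι) := ⟨rfl⟩

/-!
The lower bound holds pointwise. Writing `ρ = U diag(λ↓) U*` and `H = V diag(E↑) V*`, one gets
`Re tr(ρH) = λ↓ ⬝ᵥ S E↑` with `S = (|(U*V)ᵢⱼ|²)` doubly stochastic; by Birkhoff's theorem `S` is a
convex combination of permutation matrices, and for each of them the rearrangement inequality gives
`λ↓ ⬝ᵥ E↑ ≤ λ↓ ⬝ᵥ (E↑ ∘ σ)`. This is von Neumann's trace inequality `∑ₖ λ↓ₖ E↑ₖ ≤ Re tr(ρH)`.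

For the upper bound, `∑ₖ λ↓ₖ E↑ₖ ≥ 0` as both spectra are nonnegative, so the ergotropy is at most
`Re tr(ρH)`, which is linear in `ρ = T(ψ)`. Invariance of `μ` under coordinate sign flips and
swaps gives the second moments `𝔼[ψₐ ψ̄_b] = δₐ_b / d²`, hence `𝔼[T(ψ)] = I/d` and
`𝔼[tr(T(ψ) H)] = tr H / d`.
-/

section MatrixLemmas

variable {ι : Type*} [Fintype ι] [DecidableEq ι]

theorem Antivary.dotProduct_le_dotProduct_mulVec {f g : ι → ℝ} (hfg : Antivary f g)
    {S : Matrix ι ι ℝ} (hS : S ∈ doublyStochastic ℝ ι) : f ⬝ᵥ g ≤ f ⬝ᵥ (S *ᵥ g) := by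
  rw [← SetLike.mem_coe, doublyStochastic_eq_convexHull_permMatrix] at hS
  refine convexHull_min ?_ ?_ hS (t := {S | f ⬝ᵥ g ≤ f ⬝ᵥ (S *ᵥ g)})
  · rintro _ ⟨σ, rfl⟩
    simpa [Matrix.permMatrix_mulVec, dotProduct] using hfg.sum_mul_le_sum_mul_comp_perm
  · intro S hS T hT a b ha hb hab
    simp only [Set.mem_ofPred_eq, add_mulVec, smul_mulVec, dotProduct_add, dotProduct_smul,
      smul_eq_mul] at hS hT ⊢
    calc f ⬝ᵥ g = a * (f ⬝ᵥ g) + b * (f ⬝ᵥ g) := by rw [← add_mul, hab, one_mul]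
      _ ≤ _ := add_le_add (mul_le_mul_of_nonneg_left hS ha) (mul_le_mul_of_nonneg_left hT hb)

theorem Matrix.normSq_mem_doublyStochastic {W : Matrix ι ι ℂ} (hW : W ∈ unitaryGroup ι ℂ) :
    Matrix.of (fun i j => Complex.normSq (W i j)) ∈ doublyStochastic ℝ ι := by
  have hrow (i : ι) : ((∑ j, Complex.normSq (W i j) : ℝ) : ℂ) = 1 := by
    simpa [mul_apply, Complex.mul_conj, Complex.normSq_eq_norm_sq] using
      congrFun₂ (mem_unitaryGroup_iff.mp hW) i i
  have hcol (j : ι) : ((∑ i, Complex.normSq (W i j) : ℝ) : ℂ) = 1 := by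
    simpa [mul_apply, Complex.conj_mul', Complex.normSq_eq_norm_sq] using
      congrFun₂ (mem_unitaryGroup_iff'.mp hW) j j
  rw [mem_doublyStochastic_iff_sum]
  exact ⟨fun i j => Complex.normSq_nonneg _, fun i => mod_cast hrow i, fun j => mod_cast hcol j⟩

theorem Matrix.re_trace_conj_diagonal_mul_conj_diagonal {U V : Matrix ι ι ℂ}
    (a b : ι → ℝ) :
    ((U * diagonal (Complex.ofReal ∘ a) * star U) *
        (V * diagonal (Complex.ofReal ∘ b) * star V)).trace.re =
      a ⬝ᵥ (Matrix.of (fun i j => Complex.normSq ((star U * V) i j)) *ᵥ b) := by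
  set W := star U * V
  have hcycle : ((U * diagonal (Complex.ofReal ∘ a) * star U) *
        (V * diagonal (Complex.ofReal ∘ b) * star V)).trace =
      (diagonal (Complex.ofReal ∘ a) * W * diagonal (Complex.ofReal ∘ b) * star W).trace := by
    rw [Matrix.mul_assoc U, Matrix.mul_assoc U, trace_mul_comm U]
    simp only [W, star_mul, star_star, Matrix.mul_assoc]
  rw [hcycle, Matrix.trace, Complex.re_sum]
  refine Finset.sum_congr rfl fun i _ => ?_
  rw [diag_apply, mul_apply, Complex.re_sum]
  simp only [mulVec, dotProduct, Finset.mul_sum]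
  refine Finset.sum_congr rfl fun j _ => ?_
  have hnormSq : W i j * star (W i j) = (Complex.normSq (W i j) : ℂ) := Complex.mul_conj _
  rw [mul_diagonal, diagonal_mul, star_apply, of_apply, Function.comp_apply, Function.comp_apply,
    ← Complex.ofReal_re (a i * _)]
  congr 1
  push_cast
  rw [← hnormSq]
  ring

theorem Matrix.IsHermitian.exists_unitary_eq_mul_diagonal_comp_perm {A : Matrix ι ι ℂ}
    (hA : A.IsHermitian) (σ : Equiv.Perm ι) :
    ∃ U ∈ unitaryGroup ι ℂ,
      A = U * diagonal (Complex.ofReal ∘ hA.eigenvalues ∘ σ) * star U := by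
  set U₀ : Matrix ι ι ℂ := (hA.eigenvectorUnitary : Matrix ι ι ℂ)
  have hU₀ : U₀ * star U₀ = 1 := mem_unitaryGroup_iff.mp hA.eigenvectorUnitary.2
  have hstar : star (U₀.submatrix id σ) = (star U₀).submatrix σ id := by
    simp only [star_eq_conjTranspose, conjTranspose_submatrix]
  refine ⟨U₀.submatrix id σ, ?_, ?_⟩
  · rw [mem_unitaryGroup_iff, hstar, submatrix_mul_equiv, hU₀, submatrix_id_id]
  · rw [hstar, ← Function.comp_assoc, ← submatrix_diagonal_equiv, submatrix_mul_equiv,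
      submatrix_mul_equiv, submatrix_id_id]
    conv_lhs => rw [hA.spectral_theorem]
    rfl

end MatrixLemmas

section Spectrum

variable {d : ℕ}

theorem eigsInc_eq {A : Matrix (Fin d) (Fin d) ℂ} (hA : A.IsHermitian) :
    eigsInc A = hA.eigenvalues ∘ Tuple.sort hA.eigenvalues :=
  dif_pos hA

theorem eigsDec_eq {A : Matrix (Fin d) (Fin d) ℂ} (hA : A.IsHermitian) :
    eigsDec A = hA.eigenvalues ∘ (Fin.revPerm.trans (Tuple.sort hA.eigenvalues)) := by
  ext k
  simp [eigsDec, eigsInc_eq hA]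

theorem eigsInc_monotone (A : Matrix (Fin d) (Fin d) ℂ) : Monotone (eigsInc A) := by
  unfold eigsInc
  split_ifs
  exacts [Tuple.monotone_sort _, monotone_const]

theorem eigsDec_antitone (A : Matrix (Fin d) (Fin d) ℂ) : Antitone (eigsDec A) :=
  (eigsInc_monotone A).comp_antitone Fin.rev_anti

theorem eigsInc_nonneg {A : Matrix (Fin d) (Fin d) ℂ} (hA : A.PosSemidef) (k : Fin d) :
    0 ≤ eigsInc A k := by
  rw [eigsInc_eq hA.1]
  exact hA.eigenvalues_nonneg _

theorem sum_eigsDec_mul_eigsInc_le_re_trace_mul {ρ H : Matrix (Fin d) (Fin d) ℂ}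
    (hρ : ρ.IsHermitian) (hH : H.IsHermitian) :
    ∑ k, eigsDec ρ k * eigsInc H k ≤ (ρ * H).trace.re := by
  obtain ⟨U, hU, hρU⟩ := hρ.exists_unitary_eq_mul_diagonal_comp_perm
    (Fin.revPerm.trans (Tuple.sort hρ.eigenvalues))
  obtain ⟨V, hV, hHV⟩ := hH.exists_unitary_eq_mul_diagonal_comp_perm (Tuple.sort hH.eigenvalues)
  rw [← eigsDec_eq hρ] at hρU
  rw [← eigsInc_eq hH] at hHV
  conv_rhs => rw [hρU, hHV, re_trace_conj_diagonal_mul_conj_diagonal]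
  exact ((eigsDec_antitone ρ).antivary (eigsInc_monotone H)).dotProduct_le_dotProduct_mulVec
    (normSq_mem_doublyStochastic (mul_mem (Unitary.star_mem hU) hV))

theorem ergotropy_nonneg {ρ H : Matrix (Fin d) (Fin d) ℂ} (hρ : ρ.IsHermitian)
    (hH : H.IsHermitian) : 0 ≤ ergotropy ρ H :=
  sub_nonneg.mpr (sum_eigsDec_mul_eigsInc_le_re_trace_mul hρ hH)

theorem ergotropy_le_re_trace_mul {ρ H : Matrix (Fin d) (Fin d) ℂ} (hρ : ρ.PosSemidef)
    (hH : H.PosSemidef) : ergotropy ρ H ≤ (ρ * H).trace.re :=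
  sub_le_self _ <| Finset.sum_nonneg fun k _ =>
    mul_nonneg (eigsInc_nonneg hρ _) (eigsInc_nonneg hH k)

end Spectrum

section Moments

open MeasureTheory

variable {ι : Type*} [Fintype ι] {μ : Measure (EuclideanSpace ℂ ι)}

theorem integral_comp_linearIsometryEquiv_of_map_eq
    {U : EuclideanSpace ℂ ι ≃ₗᵢ[ℂ] EuclideanSpace ℂ ι} (hU : μ.map U = μ)
    (f : EuclideanSpace ℂ ι → ℂ) : ∫ ψ, f (U ψ) ∂μ = ∫ ψ, f ψ ∂μ :=
  (⟨U.continuous.measurable, hU⟩ : MeasurePreserving U μ μ).integral_comp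
    U.toHomeomorph.measurableEmbedding f

theorem integrable_mul_conj_apply [IsFiniteMeasure μ] (hsphere : ∀ᵐ ψ ∂μ, ‖ψ‖ = 1) (a b : ι) :
    Integrable (fun ψ : EuclideanSpace ℂ ι => ψ a * starRingEnd ℂ (ψ b)) μ := by
  refine Integrable.of_bound (by fun_prop) 1 ?_
  filter_upwards [hsphere] with ψ hψ
  rw [norm_mul, Complex.norm_conj]
  calc ‖ψ a‖ * ‖ψ b‖ ≤ ‖ψ‖ * ‖ψ‖ :=
        mul_le_mul (PiLp.norm_apply_le ψ a) (PiLp.norm_apply_le ψ b) (norm_nonneg _) (norm_nonneg _)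
    _ = 1 := by rw [hψ, one_mul]

variable [DecidableEq ι]

theorem integral_mul_conj_apply_of_ne
    (hinv : ∀ U : EuclideanSpace ℂ ι ≃ₗᵢ[ℂ] EuclideanSpace ℂ ι, μ.map U = μ) {a b : ι}
    (hab : a ≠ b) : ∫ ψ, ψ a * starRingEnd ℂ (ψ b) ∂μ = 0 := by
  -- negating the coordinate `a` is an isometry that flips the sign of the integrand
  let R : EuclideanSpace ℂ ι ≃ₗᵢ[ℂ] EuclideanSpace ℂ ι := LinearIsometryEquiv.piLpCongrRight 2
    fun i => if i = a then LinearIsometryEquiv.neg ℂ else LinearIsometryEquiv.refl ℂ ℂ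
  have hR (ψ : EuclideanSpace ℂ ι) :
      R ψ a * starRingEnd ℂ (R ψ b) = -(ψ a * starRingEnd ℂ (ψ b)) := by
    simp [R, hab.symm]
  have h := integral_comp_linearIsometryEquiv_of_map_eq (hinv R) fun ψ => ψ a * starRingEnd ℂ (ψ b)
  simp only [hR, integral_neg] at h
  exact CharZero.eq_neg_self_iff.mp h.symm

theorem integral_mul_conj_apply_self [IsProbabilityMeasure μ] (hsphere : ∀ᵐ ψ ∂μ, ‖ψ‖ = 1)
    (hinv : ∀ U : EuclideanSpace ℂ ι ≃ₗᵢ[ℂ] EuclideanSpace ℂ ι, μ.map U = μ) (a : ι) :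
    ∫ ψ, ψ a * starRingEnd ℂ (ψ a) ∂μ = (Fintype.card ι : ℂ)⁻¹ := by
  have hswap (b : ι) :
      ∫ ψ, ψ b * starRingEnd ℂ (ψ b) ∂μ = ∫ ψ, ψ a * starRingEnd ℂ (ψ a) ∂μ := by
    have h := integral_comp_linearIsometryEquiv_of_map_eq
      (hinv (LinearIsometryEquiv.piLpCongrLeft 2 ℂ ℂ (Equiv.swap a b)))
      fun ψ => ψ a * starRingEnd ℂ (ψ a)
    simpa [LinearIsometryEquiv.piLpCongrLeft_apply] using h
  have hsum : ∑ b, ∫ ψ, ψ b * starRingEnd ℂ (ψ b) ∂μ = 1 := by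
    rw [← integral_finsetSum _ fun b _ => integrable_mul_conj_apply hsphere b b]
    have hnorm : ∀ᵐ ψ ∂μ, ∑ b, ψ b * starRingEnd ℂ (ψ b) = 1 := by
      filter_upwards [hsphere] with ψ hψ
      simp_rw [Complex.mul_conj']
      exact_mod_cast (EuclideanSpace.norm_sq_eq ψ).symm.trans (by rw [hψ, one_pow])
    simp [integral_congr_ae hnorm]
  simp only [hswap, Finset.sum_const, Finset.card_univ, nsmul_eq_mul] at hsum
  exact eq_inv_of_mul_eq_one_right hsum

end Moments

section PartialTrace

open MeasureTheory

variable {d : ℕ}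

theorem partialTrace_posSemidef (ψ : EuclideanSpace ℂ (Fin d × Fin d)) :
    (partialTrace ψ).PosSemidef := by
  have h : partialTrace ψ = Matrix.of (fun i k => ψ (i, k)) * (Matrix.of fun i k => ψ (i, k))ᴴ := by
    ext i j
    simp [partialTrace, mul_apply]
  rw [h]
  exact posSemidef_self_mul_conjTranspose _

variable {μ : Measure (EuclideanSpace ℂ (Fin d × Fin d))}

theorem integrable_partialTrace_apply [IsFiniteMeasure μ] (hsphere : ∀ᵐ ψ ∂μ, ‖ψ‖ = 1)
    (i j : Fin d) : Integrable (fun ψ => partialTrace ψ i j) μ := by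
  simp only [partialTrace, of_apply]
  exact integrable_finsetSum _ fun k _ => integrable_mul_conj_apply hsphere (i, k) (j, k)

theorem integrable_trace_partialTrace_mul [IsFiniteMeasure μ] (hsphere : ∀ᵐ ψ ∂μ, ‖ψ‖ = 1)
    (H : Matrix (Fin d) (Fin d) ℂ) : Integrable (fun ψ => (partialTrace ψ * H).trace) μ := by
  simp only [trace, diag_apply, mul_apply]
  exact integrable_finsetSum _ fun i _ => integrable_finsetSum _ fun j _ =>
    (integrable_partialTrace_apply hsphere i j).mul_const _

theorem integral_partialTrace_apply [IsProbabilityMeasure μ] (hsphere : ∀ᵐ ψ ∂μ, ‖ψ‖ = 1)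
    (hinv : ∀ U : EuclideanSpace ℂ (Fin d × Fin d) ≃ₗᵢ[ℂ] EuclideanSpace ℂ (Fin d × Fin d),
      μ.map U = μ) (i j : Fin d) :
    ∫ ψ, partialTrace ψ i j ∂μ = if i = j then (d : ℂ)⁻¹ else 0 := by
  simp only [partialTrace, of_apply]
  rw [integral_finsetSum _ fun k _ => integrable_mul_conj_apply hsphere (i, k) (j, k)]
  split_ifs with hij
  · subst hij
    simp only [integral_mul_conj_apply_self hsphere hinv, Fintype.card_prod, Fintype.card_fin,
      Finset.sum_const, Finset.card_univ, nsmul_eq_mul, Nat.cast_mul, mul_inv, ← mul_assoc]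
    rcases eq_or_ne (d : ℂ) 0 with hd | hd
    · simp [hd]
    · rw [mul_inv_cancel₀ hd, one_mul]
  · exact Finset.sum_eq_zero fun k _ =>
      integral_mul_conj_apply_of_ne hinv fun h => hij (Prod.ext_iff.mp h).1

theorem integral_trace_partialTrace_mul [IsProbabilityMeasure μ]
    (hsphere : ∀ᵐ ψ ∂μ, ‖ψ‖ = 1)
    (hinv : ∀ U : EuclideanSpace ℂ (Fin d × Fin d) ≃ₗᵢ[ℂ] EuclideanSpace ℂ (Fin d × Fin d),
      μ.map U = μ) (H : Matrix (Fin d) (Fin d) ℂ) :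
    ∫ ψ, (partialTrace ψ * H).trace ∂μ = H.trace / d := by
  simp only [trace, diag_apply, mul_apply]
  rw [integral_finsetSum _ fun i _ => integrable_finsetSum _ fun j _ =>
    (integrable_partialTrace_apply hsphere i j).mul_const _, Finset.sum_div]
  refine Finset.sum_congr rfl fun i _ => ?_
  rw [integral_finsetSum _ fun j _ => (integrable_partialTrace_apply hsphere i j).mul_const _]
  simp [integral_mul_const, integral_partialTrace_apply hsphere hinv, div_eq_inv_mul]

end PartialTrace

open MeasureTheory in
/-- For positive semidefinite `H`, the ensemble-average ergotropy of
the reduced state satisfies `0 ≤ ⟨E⟩ ≤ tr(H)/d`. -/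
theorem average_ergotropy_bounds {d : ℕ} (H : Matrix (Fin d) (Fin d) ℂ)
    (hH : H.PosSemidef)
    (μ : Measure (EuclideanSpace ℂ (Fin d × Fin d))) [IsProbabilityMeasure μ]
    (hsphere : ∀ᵐ ψ ∂μ, ‖ψ‖ = 1)
    (hinv : ∀ U : EuclideanSpace ℂ (Fin d × Fin d) ≃ₗᵢ[ℂ] EuclideanSpace ℂ (Fin d × Fin d),
      Measure.map U μ = μ) :
    0 ≤ ∫ ψ, ergotropy (partialTrace ψ) H ∂μ ∧
      ∫ ψ, ergotropy (partialTrace ψ) H ∂μ ≤ (H.trace).re / d := by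
  have hlower (ψ : EuclideanSpace ℂ (Fin d × Fin d)) : 0 ≤ ergotropy (partialTrace ψ) H :=
    ergotropy_nonneg (partialTrace_posSemidef ψ).1 hH.1
  have htrace := integrable_trace_partialTrace_mul hsphere H
  refine ⟨integral_nonneg hlower, ?_⟩
  calc ∫ ψ, ergotropy (partialTrace ψ) H ∂μ ≤ ∫ ψ, (partialTrace ψ * H).trace.re ∂μ :=
        integral_mono_of_nonneg (.of_forall hlower) htrace.re
          (.of_forall fun ψ => ergotropy_le_re_trace_mul (partialTrace_posSemidef ψ) hH)
    _ = (∫ ψ, (partialTrace ψ * H).trace ∂μ).re := integral_re htrace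
    _ = (H.trace / d).re := by rw [integral_trace_partialTrace_mul hsphere hinv]
    _ = H.trace.re / d := Complex.div_natCast_re _ _
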